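/- Let a ≥ 2 be an even integer and p ∈ (0,1) with q = 1 − p. Then for every γ ∈ (0,1): u(a/2; γ) = C*·s(a/2; γ), where C* = (q/p)^{a/2}/(1 + (q/p)^{a/2}). Consequently, any function of the form q(γ) = u(a/2;γ) + (1 − s(a/2;γ))·C* is identically equal to C* for all γ ∈ (0,1), recovering the midpoint invariance of the ruin probability. -/
import Mathlib


/-- Eigenvalue `λ_ν = 2√(p(1−p))·cos(πν/a)`. -/
noncomputable def lam (a : ℕ) (p : ℝ) (ν : ℕ) : ℝ :=
  2 * Real.sqrt (p * (1 - p)) * Real.cos (Real.pi * ν / a)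

/-- Spectral transfer function `f_ν(γ) = λ_ν(1−γ)/(1 − λ_ν(1−γ))`. -/
noncomputable def fer (a : ℕ) (p : ℝ) (ν : ℕ) (γ : ℝ) : ℝ :=
  lam a p ν * (1 - γ) / (1 - lam a p ν * (1 - γ))

/-- Spectral coefficient `A_ν(w) = (2/a)·(q/p)^{w/2}·sin(πνw/a)·sin(πν/a)`. -/
noncomputable def Acoef (a : ℕ) (p : ℝ) (ν w : ℕ) : ℝ :=
  (2 / a) * ((1 - p) / p) ^ ((w : ℝ) / 2) *
    Real.sin (Real.pi * ν * w / a) * Real.sin (Real.pi * ν / a)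

/-- Spectral coefficient `B_ν(w) = (2/a)·(p/q)^{(a−w)/2}·sin(πν(a−w)/a)·sin(πν/a)`. -/
noncomputable def Bcoef (a : ℕ) (p : ℝ) (ν w : ℕ) : ℝ :=
  (2 / a) * (p / (1 - p)) ^ (((a : ℝ) - w) / 2) *
    Real.sin (Real.pi * ν * ((a : ℝ) - w) / a) * Real.sin (Real.pi * ν / a)

/-- Discounted first-cycle ruin probability `u(z;γ) = Σ_ν A_ν(z)·f_ν(γ)`. -/
noncomputable def usum (a : ℕ) (p : ℝ) (z : ℕ) (γ : ℝ) : ℝ :=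
  ∑ ν ∈ Finset.Icc 1 (a - 1), Acoef a p ν z * fer a p ν γ

/-- Discounted first-cycle absorption probability
`s(z;γ) = Σ_ν (A_ν(z)+B_ν(z))·f_ν(γ)`. -/
noncomputable def ssum (a : ℕ) (p : ℝ) (z : ℕ) (γ : ℝ) : ℝ :=
  ∑ ν ∈ Finset.Icc 1 (a - 1), (Acoef a p ν z + Bcoef a p ν z) * fer a p ν γ

/-- midpoint invariance. For even `a`, the spectral sums at the
midpoint satisfy `u(a/2;γ) = C*·s(a/2;γ)` for all `γ ∈ (0,1)`, so that
`q(γ) = u(a/2;γ) + (1 − s(a/2;γ))·C*` is identically `C*`. -/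
theorem stmt_18 (a : ℕ) (ha : 2 ≤ a) (hEven : Even a) (p : ℝ)
    (hp : p ∈ Set.Ioo (0 : ℝ) 1) :
    let Cstar : ℝ := ((1 - p) / p) ^ ((a : ℝ) / 2) / (1 + ((1 - p) / p) ^ ((a : ℝ) / 2))
    ∀ γ ∈ Set.Ioo (0 : ℝ) 1,
      usum a p (a / 2) γ = Cstar * ssum a p (a / 2) γ ∧
      usum a p (a / 2) γ + (1 - ssum a p (a / 2) γ) * Cstar = Cstar := by
  obtain ⟨k, hk⟩ := hEven
  subst hk
  intro Cstar γ hγ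
  obtain ⟨hp0, hp1⟩ := hp
  have hq : 0 < 1 - p := by linarith
  have hr : 0 < (1 - p) / p := div_pos hq hp0
  set t : ℝ := ((1 - p) / p) ^ ((k : ℝ) / 2) with ht_def
  have ht : 0 < t := Real.rpow_pos_of_pos hr _
  have h2 : (k + k) / 2 = k := by omega
  have hca : ((k + k : ℕ) : ℝ) = 2 * (k : ℝ) := by push_cast; ring
  have hC : Cstar = t * t / (1 + t * t) := by
    have : ((1 - p) / p) ^ (((k + k : ℕ) : ℝ) / 2) = t * t := by
      rw [ht_def, ← Real.rpow_add hr, hca]; ring_nf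
    simp only [Cstar, this]
  have hinv : (p / (1 - p)) ^ ((k : ℝ) / 2) = t⁻¹ := by
    rw [ht_def, ← Real.inv_rpow hr.le, inv_div]
  clear_value Cstar
  have h1t : (0 : ℝ) < 1 + t * t := by nlinarith
  have hscal : t = t * t / (1 + t * t) * (t + t⁻¹) := by
    field_simp
    ring
  have hkey : ∀ ν : ℕ, Acoef (k + k) p ν ((k + k) / 2) =
      Cstar * (Acoef (k + k) p ν ((k + k) / 2) + Bcoef (k + k) p ν ((k + k) / 2)) := by
    intro ν
    rw [h2]
    unfold Acoef Bcoef
    have hsub : ((k + k : ℕ) : ℝ) - (k : ℕ) = (k : ℕ) := by push_cast; ring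
    rw [hsub, hinv, hC, ← ht_def]
    conv_lhs => rw [hscal]
    ring
  have hus : usum (k + k) p ((k + k) / 2) γ = Cstar * ssum (k + k) p ((k + k) / 2) γ := by
    rw [usum, ssum, Finset.mul_sum]
    refine Finset.sum_congr rfl fun ν _ => ?_
    conv_lhs => rw [hkey ν]
    ring
  exact ⟨hus, by rw [hus]; ring⟩
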